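/- arXiv:1712.02847 — 2 statements merged into one kernel-verified Lean document; each statement's English description precedes it below -/
import Mathlib

section
/- Fix a transmission energy threshold Ē, a battery capacity B_cap, an initial battery level B0 ≤ B_cap, and a harvest sequence H : ℕ → ℕ. For every admissible usage sequence ε and every time t ∈ ℕ, the number of transmission attempts of ε through time t is at most that of the greedy usage sequence: N^A_ε(t) ≤ N^A_g(t). -/
/-- Battery trajectory induced by a usage sequence `ε`:
`B_ε(0) = B0`, `B_ε(t+1) = min(Bcap, max(0, B_ε(t) + H(t) - ε(t)))`
(truncated subtraction on `ℕ` realizes the `max(0, ·)`). -/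
def batt (Bcap B0 : ℕ) (H ε : ℕ → ℕ) : ℕ → ℕ
  | 0 => B0
  | t + 1 => min Bcap (batt Bcap B0 H ε t + H t - ε t)

/-- A usage sequence is admissible if it never uses more energy than is available. -/
def Admissible (Bcap B0 : ℕ) (H ε : ℕ → ℕ) : Prop :=
  ∀ t, ε t ≤ batt Bcap B0 H ε t + H t

/-- Battery trajectory of the greedy usage sequence. -/
def greedyBatt (Ebar Bcap B0 : ℕ) (H : ℕ → ℕ) : ℕ → ℕ
  | 0 => B0
  | t + 1 =>
    min Bcap (greedyBatt Ebar Bcap B0 H t + H t -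
      (if Ebar ≤ greedyBatt Ebar Bcap B0 H t + H t then Ebar else 0))

/-- The greedy usage sequence: use exactly `Ebar` units of energy whenever possible. -/
def greedyUse (Ebar Bcap B0 : ℕ) (H : ℕ → ℕ) (t : ℕ) : ℕ :=
  if Ebar ≤ greedyBatt Ebar Bcap B0 H t + H t then Ebar else 0

/-- Number of transmission attempts of the usage sequence `ε` through time `t`,
i.e. `#{τ ≤ t : ε(τ) ≥ Ebar}`. -/
def attempts (Ebar : ℕ) (ε : ℕ → ℕ) (t : ℕ) : ℕ :=
  ((Finset.range (t + 1)).filter fun τ => Ebar ≤ ε τ).card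

/-! Compare the potentials `B(t) + Ē · N(t)` of the two policies. Every attempt of an admissible
`ε` costs at least `Ē`, so before capping its potential grows by at most `H(t)` per step, while
that of the greedy policy grows by exactly `H(t)`; capping both batteries at `B_cap` keeps the
comparison as long as greedy is not behind in attempts. It never falls behind: greedy idles
only when its available energy is below `Ē`, and then the potential inequality forces `ε` to be
strictly behind already. -/

lemma min_add_le_min_add {α : Type*} [LinearOrder α] [Add α] [AddLeftMono α] [AddRightMono α]
    {c x y a b : α} (hxy : x + a ≤ y + b) (hab : a ≤ b) : min c x + a ≤ min c y + b := by
  rw [← min_add_add_right, ← min_add_add_right]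
  exact min_le_min (add_le_add_right hab c) hxy

lemma tsub_add_mul_ite_le {E a e : ℕ} (he : e ≤ a) :
    a - e + E * (if E ≤ e then 1 else 0) ≤ a := by
  split_ifs <;> omega

lemma tsub_ite_add_mul_ite (E a : ℕ) :
    a - (if E ≤ a then E else 0) + E * (if E ≤ a then 1 else 0) = a := by
  split_ifs <;> omega

/-- One step of the comparison: `b, g` are the batteries, `ce, cg` the attempt counts of `ε` and
of greedy, `h` the harvest and `e` the usage of `ε`. -/
lemma attempts_potential_step {E C b g ce cg h e : ℕ} (hc : ce ≤ cg)
    (hpot : b + E * ce ≤ g + E * cg) (he : e ≤ b + h) :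
    ce + (if E ≤ e then 1 else 0) ≤ cg + (if E ≤ g + h then 1 else 0) ∧
      min C (b + h - e) + E * (ce + if E ≤ e then 1 else 0) ≤
        min C (g + h - if E ≤ g + h then E else 0) + E * (cg + if E ≤ g + h then 1 else 0) := by
  have hcount : ce + (if E ≤ e then 1 else 0) ≤ cg + (if E ≤ g + h then 1 else 0) := by
    split_ifs with hε hg
    · omega
    · have hbehind : E * ce < E * cg := by omega
      exact Nat.lt_of_mul_lt_mul_left hbehind
    · omega
    · omega
  refine ⟨hcount, min_add_le_min_add ?_ (Nat.mul_le_mul_left E hcount)⟩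
  have hε := tsub_add_mul_ite_le (E := E) he
  have hg := tsub_ite_add_mul_ite E (g + h)
  rw [Nat.mul_add, Nat.mul_add]
  omega

section

variable {Ebar Bcap B0 : ℕ} {H ε : ℕ → ℕ}

lemma le_greedyUse_iff {t : ℕ} :
    Ebar ≤ greedyUse Ebar Bcap B0 H t ↔ Ebar ≤ greedyBatt Ebar Bcap B0 H t + H t := by
  unfold greedyUse
  split_ifs <;> omega

theorem count_le_greedy_and_potential_le (hadm : Admissible Bcap B0 H ε) (n : ℕ) :
    Nat.count (fun τ => Ebar ≤ ε τ) n ≤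
        Nat.count (fun τ => Ebar ≤ greedyUse Ebar Bcap B0 H τ) n ∧
      batt Bcap B0 H ε n + Ebar * Nat.count (fun τ => Ebar ≤ ε τ) n ≤
        greedyBatt Ebar Bcap B0 H n +
          Ebar * Nat.count (fun τ => Ebar ≤ greedyUse Ebar Bcap B0 H τ) n := by
  induction n with
  | zero => simp [batt, greedyBatt]
  | succ n ih =>
    simp only [Nat.count_succ, le_greedyUse_iff, batt, greedyBatt] at ih ⊢
    exact attempts_potential_step ih.1 ih.2 (hadm n)

end

theorem greedy_dominates_attempts_general (Ebar Bcap B0 : ℕ)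
    (H ε : ℕ → ℕ) (hadm : Admissible Bcap B0 H ε) (t : ℕ) :
    attempts Ebar ε t ≤ attempts Ebar (greedyUse Ebar Bcap B0 H) t := by
  simpa only [attempts, ← Nat.count_eq_card_filter_range] using
    (count_le_greedy_and_potential_le hadm (t + 1)).1

/-- The greedy usage sequence dominates every admissible usage sequence in the number
of transmission attempts, at every time. -/
theorem greedy_dominates_attempts (Ebar Bcap B0 : ℕ) (hB0 : B0 ≤ Bcap)
    (H ε : ℕ → ℕ) (hadm : Admissible Bcap B0 H ε) (t : ℕ) :
    attempts Ebar ε t ≤ attempts Ebar (greedyUse Ebar Bcap B0 H) t :=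
  greedy_dominates_attempts_general Ebar Bcap B0 H ε hadm t
end

section
/- (Theorem 1, SDP form.) Let S be a finite nonempty set, A : S → ℝ^{n×n}, p : S × S → ℝ nonnegative, and D > 0 a real constant. Call a real number v feasible if v ≥ −D and there exists R : S → ℝ^{n×n} with every R(s) symmetric positive semidefinite such that for all s ∈ S, (A(s))ᵀ (Σ_{s'∈S} p(s',s) R(s')) A(s) − R(s) ≼ v·I. Then the infimum of the set of feasible v equals −D if and only if there exists a family R : S → ℝ^{n×n} such that for every s ∈ S, R(s) is symmetric positive definite and R(s) − (A(s))ᵀ (Σ_{s'∈S} p(s',s) R(s')) A(s) is positive definite. -/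
/-!
Let `𝒯 R s = A(s)ᵀ (∑ p(s',s) R(s')) A(s)` (`coupledLyapunovMap`). Every feasible level is
`≥ -D`, and `0` is feasible (`R = 0`), so the infimum is `-D` iff some level `v < 0` is feasible,
iff `-D` is feasible.

If `R ≽ 0` is feasible at `v < 0`, then `R - 𝒯 R ≽ -v • 1 ≻ 0`. Replacing `R` by `R + δ • 1`
changes `R - 𝒯 R` by `δ • (1 - (∑ p(s',s)) • AᵀA)`, which keeps it positive definite for small
`δ > 0`, because positive definiteness survives small Hermitian perturbations (the spectrum of
a positive definite matrix is bounded away from `0`, that of a Hermitian one is bounded).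
Conversely, a strict solution has `R - 𝒯 R ≽ ε • 1` for a common `ε > 0` (`S` is finite), and
`(D / ε) • R` is feasible at `-D`, since `𝒯` is linear.
-/

open Matrix Filter Topology
open scoped MatrixOrder ComplexOrder

namespace Matrix

variable {ι 𝕜 : Type*} [RCLike 𝕜]

lemma smul_le_smul_of_nonneg {t : ℝ} (ht : 0 ≤ t) {X Y : Matrix ι ι 𝕜} (h : X ≤ Y) :
    t • X ≤ t • Y := by
  rw [le_iff, ← smul_sub]
  exact (le_iff.1 h).smul ht

variable [DecidableEq ι]

lemma smul_one_le_smul_one {a b : ℝ} (h : a ≤ b) :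
    a • (1 : Matrix ι ι 𝕜) ≤ b • 1 := by
  rw [le_iff, ← sub_smul]
  exact PosSemidef.one.smul (sub_nonneg.2 h)

lemma posDef_of_smul_one_le {ε : ℝ} (hε : 0 < ε) {P : Matrix ι ι 𝕜} (h : ε • 1 ≤ P) :
    P.PosDef := by
  simpa using (PosDef.one.smul hε).add_posSemidef (le_iff.1 h)

variable [Fintype ι]

lemma PosDef.exists_pos_smul_one_le {P : Matrix ι ι 𝕜} (hP : P.PosDef) :
    ∃ ε > (0 : ℝ), ε • (1 : Matrix ι ι 𝕜) ≤ P := by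
  obtain ⟨ε, hε, hle⟩ :=
    (ContinuousFunctionalCalculus.isCompact_spectrum (R := ℝ) P).exists_forall_le'
      continuousOn_id fun x hx => hP.isStrictlyPositive.spectrum_pos hx
  exact ⟨ε, hε, by simpa [Algebra.algebraMap_eq_smul_one] using
    algebraMap_le_of_le_spectrum hle hP.isHermitian.isSelfAdjoint⟩

lemma IsHermitian.exists_neg_smul_one_le_and_le_smul_one {H : Matrix ι ι 𝕜}
    (hH : H.IsHermitian) : ∃ c : ℝ, -(c • (1 : Matrix ι ι 𝕜)) ≤ H ∧ H ≤ c • 1 := by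
  obtain ⟨c, hc⟩ :=
    (ContinuousFunctionalCalculus.isCompact_spectrum (R := ℝ) H).exists_bound_of_continuousOn
      continuousOn_id
  refine ⟨c, ?_, ?_⟩
  · simpa [Algebra.algebraMap_eq_smul_one] using
      algebraMap_le_of_le_spectrum (r := -c) (fun x hx => neg_le_of_abs_le (hc x hx))
        hH.isSelfAdjoint
  · simpa [Algebra.algebraMap_eq_smul_one] using
      le_algebraMap_of_spectrum_le (r := c) (fun x hx => le_of_abs_le (hc x hx))
        hH.isSelfAdjoint

lemma PosDef.eventually_smul_one_le {P : Matrix ι ι 𝕜} (hP : P.PosDef) :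
    ∀ᶠ ε in 𝓝[>] (0 : ℝ), ε • (1 : Matrix ι ι 𝕜) ≤ P := by
  obtain ⟨ε₀, hε₀, hε₀P⟩ := hP.exists_pos_smul_one_le
  filter_upwards [Ioo_mem_nhdsGT hε₀] with ε hε
  exact (smul_one_le_smul_one hε.2.le).trans hε₀P

lemma PosDef.eventually_posDef_add_smul {P H : Matrix ι ι 𝕜} (hP : P.PosDef)
    (hH : H.IsHermitian) : ∀ᶠ t in 𝓝 (0 : ℝ), (P + t • H).PosDef := by
  obtain ⟨ε, hε, hεP⟩ := hP.exists_pos_smul_one_le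
  obtain ⟨c, hcH, hHc⟩ := hH.exists_neg_smul_one_le_and_le_smul_one
  have hsmall : ∀ᶠ t in 𝓝 (0 : ℝ), |t| * c < ε :=
    (continuous_abs.mul continuous_const).tendsto' 0 0 (by simp) |>.eventually (gt_mem_nhds hε)
  filter_upwards [hsmall] with t ht
  have htH : -((|t| * c) • (1 : Matrix ι ι 𝕜)) ≤ t • H := by
    rcases le_total 0 t with h | h
    · rw [abs_of_nonneg h, mul_smul, ← smul_neg]
      exact smul_le_smul_of_nonneg h hcH
    · rw [abs_of_nonpos h, mul_smul, ← neg_smul_neg t H, ← smul_neg]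
      exact smul_le_smul_of_nonneg (neg_nonneg.2 h) (neg_le_neg hHc)
  refine posDef_of_smul_one_le (sub_pos.2 ht) ?_
  calc (ε - |t| * c) • (1 : Matrix ι ι 𝕜) = ε • 1 + -((|t| * c) • 1) := by
        rw [sub_smul, sub_eq_add_neg]
    _ ≤ P + t • H := add_le_add hεP htH

end Matrix

section CoupledLyapunov

variable {S ι : Type*} [Fintype S] [Fintype ι]

def coupledLyapunovMap (A : S → Matrix ι ι ℝ) (p : S → S → ℝ) (R : S → Matrix ι ι ℝ) (s : S) :
    Matrix ι ι ℝ :=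
  (A s)ᵀ * (∑ s', p s' s • R s') * A s

variable {A : S → Matrix ι ι ℝ} {p : S → S → ℝ}

lemma coupledLyapunovMap_smul (t : ℝ) (R : S → Matrix ι ι ℝ) :
    coupledLyapunovMap A p (t • R) = t • coupledLyapunovMap A p R := by
  funext s
  simp only [coupledLyapunovMap, Pi.smul_apply, smul_comm _ t, ← Finset.smul_sum,
    Matrix.mul_smul, Matrix.smul_mul]

variable [DecidableEq ι]

lemma coupledLyapunovMap_add_smul_one (R : S → Matrix ι ι ℝ) (δ : ℝ) (s : S) :
    coupledLyapunovMap A p (R + δ • 1) s =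
      coupledLyapunovMap A p R s + δ • ((∑ s', p s' s) • ((A s)ᵀ * A s)) := by
  simp only [coupledLyapunovMap, Pi.add_apply, Pi.smul_apply, Pi.one_apply, smul_add,
    Finset.sum_add_distrib, smul_smul, ← Finset.sum_smul, Matrix.mul_add, Matrix.add_mul,
    Matrix.mul_smul, Matrix.smul_mul, Matrix.mul_one, Finset.sum_mul, mul_comm δ]

lemma exists_coupledLyapunovMap_sub_le_smul_one {R : S → Matrix ι ι ℝ}
    (hR : ∀ s, (R s).PosDef ∧ (R s - coupledLyapunovMap A p R s).PosDef) {v : ℝ} (hv : v < 0) :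
    ∃ R' : S → Matrix ι ι ℝ, (∀ s, (R' s).PosSemidef) ∧
      ∀ s, coupledLyapunovMap A p R' s - R' s ≤ v • 1 := by
  have hmargin : ∀ᶠ ε in 𝓝[>] (0 : ℝ), ∀ s, ε • 1 ≤ R s - coupledLyapunovMap A p R s :=
    eventually_all.2 fun s => (hR s).2.eventually_smul_one_le
  obtain ⟨ε, hεR, hε⟩ := (hmargin.and self_mem_nhdsWithin).exists
  have ht : 0 ≤ -v / ε := div_nonneg (neg_nonneg.2 hv.le) (le_of_lt hε)
  refine ⟨(-v / ε) • R, fun s => (hR s).1.posSemidef.smul ht, fun s => ?_⟩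
  calc coupledLyapunovMap A p ((-v / ε) • R) s - ((-v / ε) • R) s
      = -((-v / ε) • (R s - coupledLyapunovMap A p R s)) := by
        rw [coupledLyapunovMap_smul, Pi.smul_apply, Pi.smul_apply, smul_sub, neg_sub]
    _ ≤ -((-v / ε) • ε • 1) := neg_le_neg (smul_le_smul_of_nonneg ht (hεR s))
    _ = v • 1 := by rw [smul_smul, div_mul_cancel₀ _ (ne_of_gt hε), neg_smul, neg_neg]

lemma exists_posDef_of_coupledLyapunovMap_sub_le_smul_one {R : S → Matrix ι ι ℝ}
    (hR : ∀ s, (R s).PosSemidef) {v : ℝ} (hv : v < 0)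
    (h : ∀ s, coupledLyapunovMap A p R s - R s ≤ v • 1) :
    ∃ R' : S → Matrix ι ι ℝ,
      ∀ s, (R' s).PosDef ∧ (R' s - coupledLyapunovMap A p R' s).PosDef := by
  have hgap : ∀ s, (R s - coupledLyapunovMap A p R s).PosDef := fun s =>
    posDef_of_smul_one_le (neg_pos.2 hv) <|
      le_iff.2 <| by convert le_iff.1 (h s) using 1; rw [neg_smul]; abel
  set H : S → Matrix ι ι ℝ := fun s => 1 - (∑ s', p s' s) • ((A s)ᵀ * A s)
  have hH : ∀ s, (H s).IsHermitian := fun s => by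
    have hAA : ((∑ s', p s' s) • ((A s)ᵀ * A s)).IsHermitian :=
      (conjTranspose_eq_transpose_of_trivial (A s) ▸
        isHermitian_conjTranspose_mul_self (A s)).smul (IsSelfAdjoint.all _)
    exact isHermitian_one.sub hAA
  have hperturb : ∀ᶠ δ in 𝓝[>] (0 : ℝ), ∀ s,
      (R s - coupledLyapunovMap A p R s + δ • H s).PosDef :=
    eventually_all.2 fun s =>
      eventually_nhdsWithin_of_eventually_nhds ((hgap s).eventually_posDef_add_smul (hH s))
  obtain ⟨δ, hδR, hδ⟩ := (hperturb.and self_mem_nhdsWithin).exists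
  refine ⟨R + δ • 1, fun s => ⟨PosDef.posSemidef_add (hR s) (PosDef.one.smul hδ), ?_⟩⟩
  convert hδR s using 1
  rw [coupledLyapunovMap_add_smul_one]
  simp only [H, Pi.add_apply, Pi.smul_apply, Pi.one_apply, smul_sub]
  abel

end CoupledLyapunov

theorem sdp_stability_test_general (n : ℕ) (S : Type*) [Fintype S]
    (A : S → Matrix (Fin n) (Fin n) ℝ) (p : S → S → ℝ)
    (D : ℝ) (hD : 0 < D) :
    sInf {v : ℝ | -D ≤ v ∧ ∃ R : S → Matrix (Fin n) (Fin n) ℝ,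
        (∀ s : S, (R s).PosSemidef) ∧ ∀ s : S,
          (v • (1 : Matrix (Fin n) (Fin n) ℝ) -
            ((A s)ᵀ * (∑ s' : S, p s' s • R s') * A s - R s)).PosSemidef} = -D ↔
    (∃ R : S → Matrix (Fin n) (Fin n) ℝ, ∀ s : S, (R s).PosDef ∧
        (R s - (A s)ᵀ * (∑ s' : S, p s' s • R s') * A s).PosDef) := by
  set F := {v : ℝ | -D ≤ v ∧ ∃ R : S → Matrix (Fin n) (Fin n) ℝ,
    (∀ s, (R s).PosSemidef) ∧ ∀ s, coupledLyapunovMap A p R s - R s ≤ v • 1}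
  change sInf F = -D ↔ ∃ R : S → Matrix (Fin n) (Fin n) ℝ,
    ∀ s, (R s).PosDef ∧ (R s - coupledLyapunovMap A p R s).PosDef
  have hzero : (0 : ℝ) ∈ F :=
    ⟨(neg_neg_of_pos hD).le, 0, fun _ => PosSemidef.zero, fun s => by
      simp [coupledLyapunovMap]⟩
  constructor
  · intro hinf
    obtain ⟨v, ⟨-, R, hR, hRv⟩, hv⟩ :=
      exists_lt_of_csInf_lt ⟨0, hzero⟩ (hinf.trans_lt (neg_neg_of_pos hD))
    exact exists_posDef_of_coupledLyapunovMap_sub_le_smul_one hR hv hRv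
  · rintro ⟨R, hR⟩
    obtain ⟨R', hR'0, hR'⟩ := exists_coupledLyapunovMap_sub_le_smul_one hR (neg_neg_of_pos hD)
    exact IsLeast.csInf_eq ⟨⟨le_rfl, R', hR'0, hR'⟩, fun v hv => hv.1⟩

/-- Theorem 1 (SDP form): the infimum of the feasible values `v ≥ -D` of the
semidefinite program with constraints `Aᵀ(Σ_{s'} p(s',s) R(s'))A - R(s) ≼ v·I`,
`R(s) ≽ 0`, equals `-D` if and only if the strict coupled Lyapunov inequalities
admit a positive definite solution, i.e., the Markov jump linear system with mode
matrices `A s` and transition probabilities `p s' s` is mean-square stable. -/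
theorem sdp_stability_test (n : ℕ) (S : Type*) [Fintype S] [Nonempty S]
    (A : S → Matrix (Fin n) (Fin n) ℝ) (p : S → S → ℝ) (hp : ∀ s' s, 0 ≤ p s' s)
    (D : ℝ) (hD : 0 < D) :
    sInf {v : ℝ | -D ≤ v ∧ ∃ R : S → Matrix (Fin n) (Fin n) ℝ,
        (∀ s : S, (R s).PosSemidef) ∧ ∀ s : S,
          (v • (1 : Matrix (Fin n) (Fin n) ℝ) -
            ((A s)ᵀ * (∑ s' : S, p s' s • R s') * A s - R s)).PosSemidef} = -D ↔
    (∃ R : S → Matrix (Fin n) (Fin n) ℝ, ∀ s : S, (R s).PosDef ∧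
        (R s - (A s)ᵀ * (∑ s' : S, p s' s • R s') * A s).PosDef) :=
  sdp_stability_test_general n S A p D hD
end
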